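/- Let α ∈ ℝ, β > 0 and γ > -1 be fixed, and for 1 < D < 2 define J(D) = ∫_0^1 (D - s)^{α - 1/2} (1 - s)^{β - 1} s^γ ds. Then uniformly in 1 < D < 2: if α + β < 1/2 then J(D) is comparable (with constants depending only on α, β, γ) to (D-1)^{α+β-1/2}; if α + β = 1/2 then J(D) is comparable to 1 + log(1/(D-1)); and if α + β > 1/2 then J(D) is comparable to 1. -/

import Mathlib

/-!
Substituting `s = 1 - t` and `d = D - 1` turns the integral into
`∫₀¹ (d + t)^a t^(β-1) (1 - t)^γ dt` with `a = α - 1/2`. On the pieces `(0, d/2)`, `(d/2, 1/2)`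
and `(1/2, 1)` the factor `d + t` is comparable to `d`, `t` and `1` respectively, and
`(1 - t)^γ` is comparable to `1` except on the last piece. Hence, uniformly in `0 < d < 1`, the
integral is comparable to `kernelProfile (a + β) d = d^(a+β) + ∫_{d/2}^{1/2} t^(a+β-1) dt + 1`.
The middle term is `log (1/d)` when `a + β = 0`, at most a multiple of `d^(a+β)` when
`a + β < 0` and bounded when `a + β > 0`.
-/

open MeasureTheory Set Filter Asymptotics Real

def fiberwiseIoo {ι : Type*} (s : Set ι) (a b : ι → ℝ) : Set (ι × ℝ) :=
  {p | p.1 ∈ s ∧ p.2 ∈ Ioo (a p.1) (b p.1)}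

namespace Asymptotics

variable {ι : Type*}

theorem isTheta_principal_of_bounds {s : Set ι} {f g : ι → ℝ} {c C : ℝ} (hc : 0 < c)
    (hg : ∀ x ∈ s, 0 ≤ g x) (hlower : ∀ x ∈ s, c * g x ≤ f x)
    (hupper : ∀ x ∈ s, f x ≤ C * g x) : f =Θ[𝓟 s] g := by
  have hf : ∀ x ∈ s, 0 ≤ f x := fun x hx => (mul_nonneg hc.le (hg x hx)).trans (hlower x hx)
  refine ⟨isBigO_principal.2 ⟨C, fun x hx => ?_⟩, isBigO_principal.2 ⟨c⁻¹, fun x hx => ?_⟩⟩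
  · rw [Real.norm_of_nonneg (hf x hx), Real.norm_of_nonneg (hg x hx)]
    exact hupper x hx
  · rw [Real.norm_of_nonneg (hf x hx), Real.norm_of_nonneg (hg x hx), le_inv_mul_iff₀ hc]
    exact hlower x hx

theorem IsTheta.exists_bounds_principal {s : Set ι} {f g : ι → ℝ} (h : f =Θ[𝓟 s] g)
    (hf : ∀ x ∈ s, 0 ≤ f x) (hg : ∀ x ∈ s, 0 ≤ g x) :
    ∃ c C : ℝ, 0 < c ∧ 0 < C ∧ ∀ x ∈ s, c * g x ≤ f x ∧ f x ≤ C * g x := by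
  obtain ⟨C, hC, hfg⟩ := h.1.exists_pos
  obtain ⟨k, hk, hgf⟩ := h.2.exists_pos
  rw [isBigOWith_principal] at hfg hgf
  refine ⟨k⁻¹, C, inv_pos.2 hk, hC, fun x hx => ⟨?_, ?_⟩⟩
  · have := hgf x hx
    rw [Real.norm_of_nonneg (hf x hx), Real.norm_of_nonneg (hg x hx)] at this
    rwa [inv_mul_le_iff₀ hk]
  · have := hfg x hx
    rwa [Real.norm_of_nonneg (hf x hx), Real.norm_of_nonneg (hg x hx)] at this

theorem isTheta_rpow_of_bounds {s : Set ι} {u v : ι → ℝ} {c C : ℝ} (hc : 0 < c)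
    (hv : ∀ x ∈ s, 0 < v x) (hlower : ∀ x ∈ s, c * v x ≤ u x)
    (hupper : ∀ x ∈ s, u x ≤ C * v x) (r : ℝ) :
    (fun x => u x ^ r) =Θ[𝓟 s] fun x => v x ^ r := by
  have hv0 : 0 ≤ᶠ[𝓟 s] v := eventually_principal.2 fun x hx => (hv x hx).le
  have hu0 : 0 ≤ᶠ[𝓟 s] u :=
    eventually_principal.2 fun x hx => (mul_nonneg hc.le (hv x hx).le).trans (hlower x hx)
  exact (isTheta_principal_of_bounds hc (fun x hx => (hv x hx).le) hlower hupper).rpow hu0 hv0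

theorem IsTheta.add_of_nonneg {l : Filter ι} {f₁ f₂ g₁ g₂ : ι → ℝ}
    (h₁ : f₁ =Θ[l] g₁) (h₂ : f₂ =Θ[l] g₂) (hf₁ : 0 ≤ᶠ[l] f₁) (hf₂ : 0 ≤ᶠ[l] f₂)
    (hg₁ : 0 ≤ᶠ[l] g₁) (hg₂ : 0 ≤ᶠ[l] g₂) :
    (f₁ + f₂) =Θ[l] (g₁ + g₂) := by
  have summand {u v : ι → ℝ} (hu : 0 ≤ᶠ[l] u) (hv : 0 ≤ᶠ[l] v) : u =O[l] (u + v) :=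
    IsBigO.of_bound 1 <| by
      filter_upwards [hu, hv] with x hux hvx
      simp only [Pi.zero_apply, Pi.add_apply] at hux hvx ⊢
      rw [Real.norm_of_nonneg hux, Real.norm_of_nonneg (add_nonneg hux hvx)]
      linarith
  exact ⟨(h₁.1.trans (summand hg₁ hg₂)).add
      (h₂.1.trans ((summand hg₂ hg₁).congr_right fun _ => add_comm _ _)),
    (h₁.2.trans (summand hf₁ hf₂)).add
      (h₂.2.trans ((summand hf₂ hf₁).congr_right fun _ => add_comm _ _))⟩

theorem isTheta_intervalIntegral {s : Set ι} {a b : ι → ℝ} {f g : ι × ℝ → ℝ}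
    (hab : ∀ i ∈ s, a i ≤ b i)
    (hf : ∀ i ∈ s, IntervalIntegrable (fun t => f (i, t)) volume (a i) (b i))
    (hg : ∀ i ∈ s, IntervalIntegrable (fun t => g (i, t)) volume (a i) (b i))
    (hf0 : ∀ p ∈ fiberwiseIoo s a b, 0 ≤ f p) (hg0 : ∀ p ∈ fiberwiseIoo s a b, 0 ≤ g p)
    (h : f =Θ[𝓟 (fiberwiseIoo s a b)] g) :
    (fun i => ∫ t in a i..b i, f (i, t)) =Θ[𝓟 s] fun i => ∫ t in a i..b i, g (i, t) := by
  obtain ⟨c, C, hc, -, hbounds⟩ := h.exists_bounds_principal hf0 hg0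
  refine isTheta_principal_of_bounds (C := C) hc (fun i hi => ?_) (fun i hi => ?_)
    (fun i hi => ?_)
  · simpa using intervalIntegral.integral_mono_on_of_le_Ioo (hab i hi) intervalIntegrable_const
      (hg i hi) fun t ht => hg0 (i, t) ⟨hi, ht⟩
  · rw [← intervalIntegral.integral_const_mul]
    exact intervalIntegral.integral_mono_on_of_le_Ioo (hab i hi) ((hg i hi).const_mul c)
      (hf i hi) fun t ht => (hbounds (i, t) ⟨hi, ht⟩).1
  · rw [← intervalIntegral.integral_const_mul]
    exact intervalIntegral.integral_mono_on_of_le_Ioo (hab i hi) (hf i hi)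
      ((hg i hi).const_mul C) fun t ht => (hbounds (i, t) ⟨hi, ht⟩).2

end Asymptotics

noncomputable def betaKernel (a β γ : ℝ) (p : ℝ × ℝ) : ℝ :=
  (p.1 + p.2) ^ a * p.2 ^ (β - 1) * (1 - p.2) ^ γ

noncomputable def kernelProfile (e d : ℝ) : ℝ :=
  d ^ e + (∫ t in d / 2..1/2, t ^ (e - 1)) + 1

section BetaKernel

variable {a β γ : ℝ}

theorem betaKernel_nonneg {d t : ℝ} (hd : 0 ≤ d) (ht : t ∈ Icc 0 1) :
    0 ≤ betaKernel a β γ (d, t) := by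
  obtain ⟨ht0, ht1⟩ := ht
  have : 0 ≤ 1 - t := sub_nonneg.2 ht1
  unfold betaKernel
  positivity

theorem intervalIntegrable_betaKernel_of_le_half (hβ : 0 < β) {d x y : ℝ} (hd : 0 < d)
    (hx : 0 ≤ x) (hxy : x ≤ y) (hy : y ≤ 1/2) :
    IntervalIntegrable (fun t => betaKernel a β γ (d, t)) volume x y := by
  have hcont : ContinuousOn (fun t : ℝ => (d + t) ^ a * (1 - t) ^ γ) (uIcc 0 (1/2)) := by
    refine ContinuousOn.mul ?_ ?_ <;> refine ContinuousOn.rpow_const (by fun_prop) fun t ht => ?_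
    all_goals rw [uIcc_of_le (by norm_num)] at ht; left; linarith [ht.1, ht.2]
  have hhalf : IntervalIntegrable (fun t => betaKernel a β γ (d, t)) volume 0 (1/2) := by
    convert (intervalIntegral.intervalIntegrable_rpow' (r := β - 1) (by linarith)).continuousOn_mul
      hcont using 1
    funext t
    unfold betaKernel
    ring
  refine hhalf.mono_set ?_
  rw [uIcc_of_le hxy, uIcc_of_le (by norm_num)]
  exact Icc_subset_Icc hx hy

theorem intervalIntegrable_one_sub_rpow (hγ : -1 < γ) :
    IntervalIntegrable (fun t : ℝ => (1 - t) ^ γ) volume (1/2) 1 := by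
  convert (intervalIntegral.intervalIntegrable_rpow' (a := 1/2) (b := 0) hγ).comp_sub_left 1
    using 1 <;> norm_num

theorem intervalIntegrable_betaKernel_of_half_le (hγ : -1 < γ) {d : ℝ} (hd : 0 < d) :
    IntervalIntegrable (fun t => betaKernel a β γ (d, t)) volume (1/2) 1 := by
  have hcont : ContinuousOn (fun t : ℝ => (d + t) ^ a * t ^ (β - 1)) (uIcc (1/2) 1) := by
    refine ContinuousOn.mul ?_ ?_ <;> refine ContinuousOn.rpow_const (by fun_prop) fun t ht => ?_
    all_goals rw [uIcc_of_le (by norm_num)] at ht; left; linarith [ht.1, ht.2]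
  exact (intervalIntegrable_one_sub_rpow hγ).continuousOn_mul hcont

theorem betaKernel_isTheta_near_zero :
    betaKernel a β γ =Θ[𝓟 (fiberwiseIoo (Ioo 0 1) (fun _ => 0) (· / 2))]
      fun p => p.1 ^ a * p.2 ^ (β - 1) := by
  have hsum := isTheta_rpow_of_bounds (u := fun p : ℝ × ℝ => p.1 + p.2) (v := Prod.fst)
    (s := fiberwiseIoo (Ioo 0 1) (fun _ => 0) (· / 2)) (c := 1) (C := 2) one_pos
    (fun p hp => hp.1.1) (fun _ ⟨⟨_, _⟩, _, _⟩ => by linarith)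
    (fun _ ⟨⟨_, _⟩, _, _⟩ => by linarith) a
  have hone := isTheta_rpow_of_bounds (u := fun p : ℝ × ℝ => 1 - p.2) (v := fun _ => 1)
    (s := fiberwiseIoo (Ioo 0 1) (fun _ => 0) (· / 2)) (c := 1/2) (C := 1) (by norm_num)
    (fun _ _ => one_pos) (fun _ ⟨⟨_, _⟩, _, _⟩ => by linarith)
    (fun _ ⟨⟨_, _⟩, _, _⟩ => by linarith) γ
  unfold betaKernel
  simpa only [one_rpow, mul_one] using
    (hsum.mul (isTheta_refl (fun p : ℝ × ℝ => p.2 ^ (β - 1)) _)).mul hone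

theorem betaKernel_isTheta_middle :
    betaKernel a β γ =Θ[𝓟 (fiberwiseIoo (Ioo 0 1) (· / 2) (fun _ => 1/2))]
      fun p => p.2 ^ (a + β - 1) := by
  have hsum := isTheta_rpow_of_bounds (u := fun p : ℝ × ℝ => p.1 + p.2) (v := Prod.snd)
    (s := fiberwiseIoo (Ioo 0 1) (· / 2) (fun _ => 1/2)) (c := 1) (C := 3) one_pos
    (fun _ ⟨⟨_, _⟩, _, _⟩ => by linarith) (fun _ ⟨⟨_, _⟩, _, _⟩ => by linarith)
    (fun _ ⟨⟨_, _⟩, _, _⟩ => by linarith) a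
  have hone := isTheta_rpow_of_bounds (u := fun p : ℝ × ℝ => 1 - p.2) (v := fun _ => 1)
    (s := fiberwiseIoo (Ioo 0 1) (· / 2) (fun _ => 1/2)) (c := 1/2) (C := 1) (by norm_num)
    (fun _ _ => one_pos) (fun _ ⟨⟨_, _⟩, _, _⟩ => by linarith)
    (fun _ ⟨⟨_, _⟩, _, _⟩ => by linarith) γ
  have hprod : (fun p : ℝ × ℝ => p.2 ^ a * p.2 ^ (β - 1) * (1:ℝ) ^ γ)
      =ᶠ[𝓟 (fiberwiseIoo (Ioo 0 1) (· / 2) (fun _ => 1/2))] fun p => p.2 ^ (a + β - 1) := by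
    refine eventually_principal.2 fun p ⟨⟨_, _⟩, _, _⟩ => ?_
    dsimp only
    rw [one_rpow, mul_one, ← rpow_add (by linarith), add_sub_assoc]
  unfold betaKernel
  exact ((hsum.mul (isTheta_refl (fun p : ℝ × ℝ => p.2 ^ (β - 1)) _)).mul hone).trans_eventuallyEq
    hprod

theorem betaKernel_isTheta_near_one :
    betaKernel a β γ =Θ[𝓟 (fiberwiseIoo (Ioo 0 1) (fun _ => 1/2) (fun _ => 1))]
      fun p => (1 - p.2) ^ γ := by
  have hsum := isTheta_rpow_of_bounds (u := fun p : ℝ × ℝ => p.1 + p.2) (v := fun _ => 1)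
    (s := fiberwiseIoo (Ioo 0 1) (fun _ => 1/2) (fun _ => 1)) (c := 1/2) (C := 2) (by norm_num)
    (fun _ _ => one_pos) (fun _ ⟨⟨_, _⟩, _, _⟩ => by linarith)
    (fun _ ⟨⟨_, _⟩, _, _⟩ => by linarith) a
  have hsnd := isTheta_rpow_of_bounds (u := fun p : ℝ × ℝ => p.2) (v := fun _ => 1)
    (s := fiberwiseIoo (Ioo 0 1) (fun _ => 1/2) (fun _ => 1)) (c := 1/2) (C := 1) (by norm_num)
    (fun _ _ => one_pos) (fun _ ⟨⟨_, _⟩, _, _⟩ => by linarith)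
    (fun _ ⟨⟨_, _⟩, _, _⟩ => by linarith) (β - 1)
  unfold betaKernel
  simpa only [one_rpow, one_mul] using
    (hsum.mul hsnd).mul (isTheta_refl (fun p : ℝ × ℝ => (1 - p.2) ^ γ) _)

theorem integral_betaKernel_near_zero_isTheta (hβ : 0 < β) :
    (fun d => ∫ t in (0:ℝ)..d / 2, betaKernel a β γ (d, t)) =Θ[𝓟 (Ioo 0 1)]
      fun d => d ^ (a + β) := by
  have hpiece := isTheta_intervalIntegral (s := Ioo 0 1) (a := fun _ => 0) (b := (· / 2))
    (f := betaKernel a β γ) (g := fun p => p.1 ^ a * p.2 ^ (β - 1))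
    (fun d hd => by linarith [hd.1])
    (fun d hd => intervalIntegrable_betaKernel_of_le_half hβ hd.1 le_rfl (by linarith [hd.1])
      (by linarith [hd.2]))
    (fun d hd => by
      dsimp only
      exact (intervalIntegral.intervalIntegrable_rpow' (by linarith)).const_mul _)
    (fun _ ⟨⟨hd, _⟩, _, _⟩ => betaKernel_nonneg hd.le ⟨by linarith, by linarith⟩)
    (fun _ ⟨⟨_, _⟩, _, _⟩ => by positivity)
    betaKernel_isTheta_near_zero
  have hval : ∀ d ∈ Ioo (0:ℝ) 1,
      ∫ t in (0:ℝ)..d / 2, d ^ a * t ^ (β - 1) = (2 ^ β * β)⁻¹ * d ^ (a + β) := by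
    intro d hd
    rw [intervalIntegral.integral_const_mul, integral_rpow (Or.inl (by linarith)), sub_add_cancel,
      zero_rpow hβ.ne', sub_zero, div_rpow hd.1.le zero_le_two, rpow_add hd.1]
    field_simp
  exact (hpiece.trans_eventuallyEq (eventually_principal.2 hval)).trans
    ((isTheta_const_mul_left (by positivity)).2 (isTheta_refl _ _))

theorem integral_betaKernel_middle_isTheta (hβ : 0 < β) :
    (fun d => ∫ t in d / 2..1/2, betaKernel a β γ (d, t)) =Θ[𝓟 (Ioo 0 1)]
      fun d => ∫ t in d / 2..1/2, t ^ (a + β - 1) :=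
  isTheta_intervalIntegral (s := Ioo 0 1) (f := betaKernel a β γ) (g := fun p => p.2 ^ (a + β - 1))
    (fun d hd => by linarith [hd.2])
    (fun d hd => intervalIntegrable_betaKernel_of_le_half hβ hd.1 (by linarith [hd.1])
      (by linarith [hd.2]) le_rfl)
    (fun d hd => intervalIntegral.intervalIntegrable_rpow
      (Or.inr (notMem_uIcc_of_lt (by linarith [hd.1]) (by norm_num))))
    (fun _ ⟨⟨hd, _⟩, _, _⟩ => betaKernel_nonneg hd.le ⟨by linarith, by linarith⟩)
    (fun _ ⟨⟨_, _⟩, _, _⟩ => rpow_nonneg (by linarith) _)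
    betaKernel_isTheta_middle

theorem integral_betaKernel_near_one_isTheta (hγ : -1 < γ) :
    (fun d => ∫ t in (1/2:ℝ)..1, betaKernel a β γ (d, t)) =Θ[𝓟 (Ioo 0 1)]
      fun _ => (1:ℝ) := by
  have hpiece := isTheta_intervalIntegral (s := Ioo 0 1) (f := betaKernel a β γ)
    (g := fun p => (1 - p.2) ^ γ) (a := fun _ => 1/2) (b := fun _ => 1) (fun _ _ => by norm_num)
    (fun d hd => intervalIntegrable_betaKernel_of_half_le hγ hd.1)
    (fun _ _ => intervalIntegrable_one_sub_rpow hγ)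
    (fun _ ⟨⟨hd, _⟩, _, _⟩ => betaKernel_nonneg hd.le ⟨by linarith, by linarith⟩)
    (fun _ ⟨⟨_, _⟩, _, _⟩ => rpow_nonneg (by linarith) _)
    betaKernel_isTheta_near_one
  have hpos : 0 < ∫ t in (1/2:ℝ)..1, (1 - t) ^ γ :=
    intervalIntegral.intervalIntegral_pos_of_pos_on (intervalIntegrable_one_sub_rpow hγ)
      (fun t ht => rpow_pos_of_pos (by linarith [ht.2]) _) (by norm_num)
  exact hpiece.trans (isTheta_const_const hpos.ne' one_ne_zero)

theorem integral_rpow_sub_one_nonneg {e d : ℝ} (hd : 0 < d) (hd1 : d < 1) :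
    0 ≤ ∫ t in d / 2..1/2, t ^ (e - 1) :=
  intervalIntegral.integral_nonneg (by linarith) fun t ht => rpow_nonneg (by linarith [ht.1]) _

theorem integral_betaKernel_isTheta_kernelProfile (hβ : 0 < β) (hγ : -1 < γ) :
    (fun d => ∫ t in (0:ℝ)..1, betaKernel a β γ (d, t)) =Θ[𝓟 (Ioo 0 1)]
      kernelProfile (a + β) := by
  have hsplit : ∀ d ∈ Ioo (0:ℝ) 1, ∫ t in (0:ℝ)..1, betaKernel a β γ (d, t) =
      (∫ t in (0:ℝ)..d / 2, betaKernel a β γ (d, t)) +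
        (∫ t in d / 2..1/2, betaKernel a β γ (d, t)) +
          ∫ t in (1/2:ℝ)..1, betaKernel a β γ (d, t) := by
    intro d hd
    have h₁ := intervalIntegrable_betaKernel_of_le_half (γ := γ) (a := a) (x := 0) (y := d / 2)
      hβ hd.1 le_rfl (by linarith [hd.1]) (by linarith [hd.2])
    have h₂ := intervalIntegrable_betaKernel_of_le_half (γ := γ) (a := a) (x := d / 2) (y := 1/2)
      hβ hd.1 (by linarith [hd.1]) (by linarith [hd.2]) le_rfl
    rw [intervalIntegral.integral_add_adjacent_intervals h₁ h₂,
      intervalIntegral.integral_add_adjacent_intervals (h₁.trans h₂)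
        (intervalIntegrable_betaKernel_of_half_le hγ hd.1)]
  have hnonneg {x y : ℝ → ℝ} (hxy : ∀ d ∈ Ioo (0:ℝ) 1, 0 ≤ x d ∧ x d ≤ y d ∧ y d ≤ 1) :
      0 ≤ᶠ[𝓟 (Ioo 0 1)] fun d => ∫ t in x d..y d, betaKernel a β γ (d, t) :=
    eventually_principal.2 fun d hd => intervalIntegral.integral_nonneg (hxy d hd).2.1
      fun t ht => betaKernel_nonneg hd.1.le ⟨(hxy d hd).1.trans ht.1, ht.2.trans (hxy d hd).2.2⟩
  have hP₁ : 0 ≤ᶠ[𝓟 (Ioo 0 1)] fun d => ∫ t in (0:ℝ)..d / 2, betaKernel a β γ (d, t) :=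
    hnonneg fun d hd => ⟨le_rfl, by linarith [hd.1], by linarith [hd.2]⟩
  have hP₂ : 0 ≤ᶠ[𝓟 (Ioo 0 1)] fun d => ∫ t in d / 2..1/2, betaKernel a β γ (d, t) :=
    hnonneg fun d hd => ⟨by linarith [hd.1], by linarith [hd.2], by norm_num⟩
  have hP₃ : 0 ≤ᶠ[𝓟 (Ioo 0 1)] fun d => ∫ t in (1/2:ℝ)..1, betaKernel a β γ (d, t) :=
    hnonneg fun _ _ => ⟨by norm_num, by norm_num, le_rfl⟩
  have hpow : 0 ≤ᶠ[𝓟 (Ioo (0:ℝ) 1)] fun d => d ^ (a + β) :=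
    eventually_principal.2 fun d hd => rpow_nonneg hd.1.le _
  have hT : 0 ≤ᶠ[𝓟 (Ioo (0:ℝ) 1)] fun d => ∫ t in d / 2..1/2, t ^ (a + β - 1) :=
    eventually_principal.2 fun d hd => integral_rpow_sub_one_nonneg hd.1 hd.2
  refine EventuallyEq.trans_isTheta (eventually_principal.2 hsplit)
    (((integral_betaKernel_near_zero_isTheta hβ).add_of_nonneg
      (integral_betaKernel_middle_isTheta hβ) hP₁ hP₂ hpow hT).add_of_nonneg
      (integral_betaKernel_near_one_isTheta hγ) ?_ hP₃ ?_
      (eventually_principal.2 fun _ _ => zero_le_one))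
  · filter_upwards [hP₁, hP₂] with d h₁ h₂ using add_nonneg h₁ h₂
  · filter_upwards [hpow, hT] with d h₁ h₂ using add_nonneg h₁ h₂

end BetaKernel

theorem integral_rpow_sub_one_eq {e x y : ℝ} (he : e ≠ 0) (hx : 0 < x) (hy : 0 < y) :
    ∫ t in x..y, t ^ (e - 1) = (y ^ e - x ^ e) / e := by
  rw [integral_rpow (Or.inr ⟨by contrapose! he; linarith, notMem_uIcc_of_lt hx hy⟩),
    sub_add_cancel]

theorem kernelProfile_isTheta_of_neg {e : ℝ} (he : e < 0) :
    kernelProfile e =Θ[𝓟 (Ioo 0 1)] fun d => d ^ e := by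
  set q := (1/2 : ℝ) ^ e / (-e)
  have hq : 0 < q := div_pos (rpow_pos_of_pos (by norm_num) _) (neg_pos.2 he)
  have hT : ∀ d ∈ Ioo (0:ℝ) 1, ∫ t in d / 2..1/2, t ^ (e - 1) = q * (d ^ e - 1) := by
    intro d hd
    rw [integral_rpow_sub_one_eq he.ne (by linarith [hd.1]) (by norm_num), div_eq_mul_one_div d,
      mul_rpow hd.1.le (by norm_num)]
    field_simp
    ring
  have hone : ∀ d ∈ Ioo (0:ℝ) 1, 1 ≤ d ^ e := fun d hd =>
    one_le_rpow_of_pos_of_le_one_of_nonpos hd.1 hd.2.le he.le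
  refine isTheta_principal_of_bounds (c := 1) (C := 2 + q) one_pos
    (fun d hd => (rpow_pos_of_pos hd.1 _).le) (fun d hd => ?_) (fun d hd => ?_)
  all_goals rw [kernelProfile, hT d hd]; nlinarith [hone d hd]

theorem kernelProfile_isTheta_of_eq_zero {e : ℝ} (he : e = 0) :
    kernelProfile e =Θ[𝓟 (Ioo 0 1)] fun d => 1 + Real.log (1 / d) := by
  subst he
  have hT : ∀ d ∈ Ioo (0:ℝ) 1, ∫ t in d / 2..1/2, t ^ ((0:ℝ) - 1) = Real.log (1 / d) := by
    intro d hd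
    simp only [zero_sub, rpow_neg_one]
    rw [integral_inv_of_pos (by linarith [hd.1]) (by norm_num)]
    congr 1
    field_simp
  have hlog : ∀ d ∈ Ioo (0:ℝ) 1, 0 ≤ Real.log (1 / d) := fun d hd =>
    Real.log_nonneg (one_le_one_div hd.1 hd.2.le)
  refine isTheta_principal_of_bounds (c := 1) (C := 2) one_pos
    (fun d hd => by linarith [hlog d hd]) (fun d hd => ?_) (fun d hd => ?_)
  all_goals rw [kernelProfile, hT d hd, rpow_zero]; linarith [hlog d hd]

theorem kernelProfile_isTheta_of_pos {e : ℝ} (he : 0 < e) :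
    kernelProfile e =Θ[𝓟 (Ioo 0 1)] fun _ => (1:ℝ) := by
  refine isTheta_principal_of_bounds (c := 1) (C := 2 + 1 / e) one_pos
    (fun _ _ => zero_le_one) (fun d hd => ?_) (fun d hd => ?_) <;> rw [kernelProfile]
  · linarith [rpow_nonneg hd.1.le e, integral_rpow_sub_one_nonneg (e := e) hd.1 hd.2]
  · have hT : ∫ t in d / 2..1/2, t ^ (e - 1) ≤ 1 / e := by
      rw [integral_rpow_sub_one_eq he.ne' (by linarith [hd.1]) (by norm_num)]
      gcongr
      linarith [rpow_le_one (by norm_num : (0:ℝ) ≤ 1/2) (by norm_num) he.le,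
        rpow_nonneg (by linarith [hd.1] : 0 ≤ d / 2) e]
    linarith [rpow_le_one hd.1.le hd.2.le he.le]

theorem integral_eq_integral_betaKernel (α β γ D : ℝ) :
    ∫ s in (0:ℝ)..1, (D - s) ^ (α - 1/2) * (1 - s) ^ (β - 1) * s ^ γ =
      ∫ t in (0:ℝ)..1, betaKernel (α - 1/2) β γ (D - 1, t) := by
  have := intervalIntegral.integral_comp_sub_left
    (fun t => betaKernel (α - 1/2) β γ (D - 1, t)) (1:ℝ) (a := 0) (b := 1)
  simp only [sub_zero, sub_self] at this
  rw [← this]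
  congr 1
  funext s
  simp only [betaKernel, sub_sub_cancel, show D - 1 + (1 - s) = D - s by ring]

theorem exists_bounds_of_kernelProfile_isTheta {α β γ : ℝ} (hβ : 0 < β) (hγ : -1 < γ)
    {φ : ℝ → ℝ} (hφ : kernelProfile (α - 1/2 + β) =Θ[𝓟 (Ioo 0 1)] φ)
    (hφ0 : ∀ d ∈ Ioo (0:ℝ) 1, 0 ≤ φ d) :
    ∃ c C : ℝ, 0 < c ∧ 0 < C ∧ ∀ D : ℝ, 1 < D → D < 2 →
      c * φ (D - 1) ≤ ∫ s in (0:ℝ)..1, (D - s) ^ (α - 1/2) * (1 - s) ^ (β - 1) * s ^ γ ∧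
      ∫ s in (0:ℝ)..1, (D - s) ^ (α - 1/2) * (1 - s) ^ (β - 1) * s ^ γ ≤ C * φ (D - 1) := by
  obtain ⟨c, C, hc, hC, hJ⟩ :=
    ((integral_betaKernel_isTheta_kernelProfile hβ hγ).trans hφ).exists_bounds_principal
      (fun d hd => intervalIntegral.integral_nonneg zero_le_one fun _ ht =>
        betaKernel_nonneg hd.1.le ht)
      hφ0
  refine ⟨c, C, hc, hC, fun D hD hD2 => ?_⟩
  rw [integral_eq_integral_betaKernel]
  exact hJ (D - 1) ⟨by linarith, by linarith⟩

theorem stmt_2 (α β γ : ℝ) (hβ : 0 < β) (hγ : -1 < γ) :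
    ∃ c C : ℝ, 0 < c ∧ 0 < C ∧ ∀ D : ℝ, 1 < D → D < 2 →
      (α + β < 1/2 →
        c * (D - 1) ^ (α + β - 1/2) ≤
          (∫ s in (0:ℝ)..1, (D - s) ^ (α - 1/2) * (1 - s) ^ (β - 1) * s ^ γ) ∧
        (∫ s in (0:ℝ)..1, (D - s) ^ (α - 1/2) * (1 - s) ^ (β - 1) * s ^ γ) ≤
          C * (D - 1) ^ (α + β - 1/2)) ∧
      (α + β = 1/2 →
        c * (1 + Real.log (1 / (D - 1))) ≤
          (∫ s in (0:ℝ)..1, (D - s) ^ (α - 1/2) * (1 - s) ^ (β - 1) * s ^ γ) ∧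
        (∫ s in (0:ℝ)..1, (D - s) ^ (α - 1/2) * (1 - s) ^ (β - 1) * s ^ γ) ≤
          C * (1 + Real.log (1 / (D - 1)))) ∧
      (α + β > 1/2 →
        c ≤ (∫ s in (0:ℝ)..1, (D - s) ^ (α - 1/2) * (1 - s) ^ (β - 1) * s ^ γ) ∧
        (∫ s in (0:ℝ)..1, (D - s) ^ (α - 1/2) * (1 - s) ^ (β - 1) * s ^ γ) ≤ C) := by
  rcases lt_trichotomy (α + β) (1/2) with h | h | h
  · obtain ⟨c, C, hc, hC, hJ⟩ := exists_bounds_of_kernelProfile_isTheta (α := α) hβ hγ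
      (kernelProfile_isTheta_of_neg (by linarith)) fun d hd => (rpow_pos_of_pos hd.1 _).le
    refine ⟨c, C, hc, hC, fun D hD hD2 => ⟨fun _ => ?_, fun h' => absurd h' h.ne,
      fun h' => absurd h' h.not_gt⟩⟩
    rw [show α + β - 1/2 = α - 1/2 + β by ring]
    exact hJ D hD hD2
  · obtain ⟨c, C, hc, hC, hJ⟩ := exists_bounds_of_kernelProfile_isTheta (α := α) hβ hγ
      (kernelProfile_isTheta_of_eq_zero (by linarith)) fun d hd =>
        add_nonneg zero_le_one (Real.log_nonneg (one_le_one_div hd.1 hd.2.le))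
    exact ⟨c, C, hc, hC, fun D hD hD2 => ⟨fun h' => absurd h h'.ne, fun _ => hJ D hD hD2,
      fun h' => absurd h h'.ne'⟩⟩
  · obtain ⟨c, C, hc, hC, hJ⟩ := exists_bounds_of_kernelProfile_isTheta (α := α) hβ hγ
      (kernelProfile_isTheta_of_pos (by linarith)) fun _ _ => zero_le_one
    refine ⟨c, C, hc, hC, fun D hD hD2 => ⟨fun h' => absurd h' h.not_gt, fun h' => absurd h' h.ne',
      fun _ => ?_⟩⟩
    simpa only [mul_one] using hJ D hD hD2
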